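/- arXiv:1408.6617 — 6 statements merged into one kernel-verified Lean document; each statement's English description precedes it below -/
import Mathlib

section
/- Let 0 < μ < p < 1. Then (1 − p)·log((1 − μ)/(1 − p)) + p·log(μ/p) ≤ −2(p − μ)². -/
theorem log_bound_hoeffding (μ p : ℝ) (hμ : 0 < μ) (hμp : μ < p) (hp : p < 1) :
    (1 - p) * Real.log ((1 - μ) / (1 - p)) + p * Real.log (μ / p)
      ≤ -2 * (p - μ) ^ 2 := by
  have hp0 : 0 < p := hμ.trans hμp
  have h1p : 0 < 1 - p := by linarith
  have h1μ : 0 < 1 - μ := by linarith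
  set f : ℝ → ℝ := fun x =>
    (1 - p) * (Real.log (1 - x) - Real.log (1 - p)) + p * (Real.log x - Real.log p)
      + 2 * (p - x) ^ 2 with hf
  have hderiv : ∀ x ∈ Set.Ioo (0 : ℝ) p,
      HasDerivAt f ((p - x) * ((x * (1 - x))⁻¹ - 4)) x := by
    intro x hx
    obtain ⟨hx0, hxp⟩ := hx
    have hx1 : 0 < 1 - x := by linarith
    have h1 : HasDerivAt (fun y : ℝ => 1 - y) (0 - 1) x :=
      (hasDerivAt_const x (1:ℝ)).sub (hasDerivAt_id x)
    have h2 : HasDerivAt (fun y : ℝ => Real.log (1 - y)) ((0 - 1) / (1 - x)) x :=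
      h1.log (by positivity)
    have h3 : HasDerivAt Real.log x⁻¹ x := Real.hasDerivAt_log (ne_of_gt hx0)
    have h4 : HasDerivAt (fun y : ℝ => p - y) (0 - 1) x :=
      (hasDerivAt_const x p).sub (hasDerivAt_id x)
    have h5 : HasDerivAt (fun y : ℝ => 2 * (p - y) ^ 2)
        (2 * (2 * (p - x) ^ 1 * (0 - 1))) x :=
      ((h4.pow 2)).const_mul 2
    have hD : HasDerivAt f
        ((1 - p) * ((0 - 1) / (1 - x) - 0) + p * (x⁻¹ - 0)
          + 2 * (2 * (p - x) ^ 1 * (0 - 1))) x := by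
      exact (((h2.sub (hasDerivAt_const x (Real.log (1 - p)))).const_mul (1 - p)).add
        ((h3.sub (hasDerivAt_const x (Real.log p))).const_mul p)).add h5
    convert hD using 1
    field_simp
    ring
  have hcont : ContinuousOn f (Set.Icc μ p) := by
    apply ContinuousOn.add
    apply ContinuousOn.add
    · apply continuousOn_const.mul
      apply ContinuousOn.sub _ continuousOn_const
      apply ContinuousOn.log (by fun_prop)
      intro x hx
      have : x ≤ p := hx.2
      have : 0 < 1 - x := by linarith
      exact ne_of_gt this
    · apply continuousOn_const.mul
      apply ContinuousOn.sub _ continuousOn_const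
      apply ContinuousOn.log continuousOn_id
      intro x hx
      have : μ ≤ x := hx.1
      exact ne_of_gt (lt_of_lt_of_le hμ this)
    · fun_prop
  have hmono : MonotoneOn f (Set.Icc μ p) := by
    apply monotoneOn_of_deriv_nonneg (convex_Icc μ p) hcont
    · intro x hx
      rw [interior_Icc] at hx
      exact ((hderiv x ⟨hμ.trans hx.1, hx.2⟩).differentiableAt).differentiableWithinAt
    · intro x hx
      rw [interior_Icc] at hx
      have hx0 : 0 < x := hμ.trans hx.1
      have hxp : x < p := hx.2
      have hx1 : 0 < 1 - x := by linarith
      rw [(hderiv x ⟨hx0, hxp⟩).deriv]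
      have hq : x * (1 - x) ≤ 1 / 4 := by nlinarith [sq_nonneg (x - 1/2)]
      have hq0 : 0 < x * (1 - x) := mul_pos hx0 hx1
      have : (4 : ℝ) ≤ (x * (1 - x))⁻¹ := by
        rw [le_inv_comm₀ (by norm_num) hq0]
        linarith
      have hpx : 0 ≤ p - x := by linarith
      nlinarith
  have hle : f μ ≤ f p :=
    hmono (Set.left_mem_Icc.mpr hμp.le) (Set.right_mem_Icc.mpr hμp.le) hμp.le
  have hfp : f p = 0 := by simp [hf]
  rw [hfp] at hle
  have e1 : Real.log ((1 - μ) / (1 - p)) = Real.log (1 - μ) - Real.log (1 - p) :=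
    Real.log_div (ne_of_gt h1μ) (ne_of_gt h1p)
  have e2 : Real.log (μ / p) = Real.log μ - Real.log p :=
    Real.log_div (ne_of_gt hμ) (ne_of_gt hp0)
  rw [e1, e2]
  simp only [hf] at hle
  linarith
end

section
/- Let μ_m, p_m for m = 0, 1, …, M satisfy 0 < μ_m < 1, 0 < p_m < 1, with μ_0 = 1 − Σ_{m=1}^M μ_m and p_0 = 1 − Σ_{m=1}^M p_m, and suppose 0 < μ_m < p_m < 1 for each 1 ≤ m ≤ M. Then for any N ∈ ℕ, ∏_{m=0}^{M} (μ_m/p_m)^{p_m N} ≤ exp(−2N Σ_{m=1}^{M} (p_m − μ_m)²). -/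
open Finset Real

/-!
Taking logarithms, the claim is `KL(p ‖ μ) ≥ 2 ∑_{m ≥ 1} (p_m - μ_m)²`. By the log-sum inequality
(Jensen for `log`), merging the coordinates `1, …, M` into one only decreases the divergence, which
reduces the claim to the binary Pinsker inequality for `U = ∑ μ_m < P = ∑ p_m`. Since all
differences `p_m - μ_m` are nonnegative, `∑ (p_m - μ_m)² ≤ (P - U)²`.
-/

lemma sum_mul_log_div_le_mul_log_div_sum {ι : Type*} (s : Finset ι) {μ p : ι → ℝ}
    (hμ : ∀ i ∈ s, 0 < μ i) (hp : ∀ i ∈ s, 0 < p i) :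
    ∑ i ∈ s, p i * log (μ i / p i) ≤ (∑ i ∈ s, p i) * log ((∑ i ∈ s, μ i) / ∑ i ∈ s, p i) := by
  rcases s.eq_empty_or_nonempty with rfl | hs
  · simp
  have hP : 0 < ∑ i ∈ s, p i := sum_pos hp hs
  have jensen := strictConcaveOn_log_Ioi.concaveOn.le_map_centerMass (t := s) (w := p)
    (p := fun i ↦ μ i / p i) (fun i hi ↦ (hp i hi).le) hP
    (fun i hi ↦ Set.mem_Ioi.mpr (div_pos (hμ i hi) (hp i hi)))
  have hcancel : ∑ i ∈ s, p i * (μ i / p i) = ∑ i ∈ s, μ i :=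
    sum_congr rfl fun i hi ↦ mul_div_cancel₀ _ (hp i hi).ne'
  simp only [centerMass, smul_eq_mul, Function.comp_apply, hcancel] at jensen
  rwa [inv_mul_le_iff₀ hP, inv_mul_eq_div] at jensen

lemma four_le_inv_mul_one_sub {x : ℝ} (hx0 : 0 < x) (hx1 : x < 1) : 4 ≤ (x * (1 - x))⁻¹ := by
  rw [le_inv_comm₀ four_pos (by nlinarith)]
  nlinarith [sq_nonneg (x - 1 / 2)]

lemma binary_pinsker_of_le {u v : ℝ} (hu : 0 < u) (huv : u ≤ v) (hv : v < 1) :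
    v * log (u / v) + (1 - v) * log ((1 - u) / (1 - v)) ≤ -2 * (v - u) ^ 2 := by
  set f : ℝ → ℝ := fun x ↦ v * log x + (1 - v) * log (1 - x) + 2 * (v - x) ^ 2
  have hderiv : ∀ x ∈ Set.Icc u v, HasDerivAt f ((v - x) * ((x * (1 - x))⁻¹ - 4)) x := by
    intro x ⟨hux, hxv⟩
    have hx0 : x ≠ 0 := (hu.trans_le hux).ne'
    have hx1 : 1 - x ≠ 0 := by linarith
    have hlog₁ := ((hasDerivAt_id' x).const_sub 1).log hx1
    have hsq := ((hasDerivAt_id' x).const_sub v).pow 2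
    refine (((hasDerivAt_log hx0).const_mul v).add (hlog₁.const_mul (1 - v))).add
      (hsq.const_mul 2) |>.congr_deriv ?_
    field_simp
    ring
  have hmono : MonotoneOn f (Set.Icc u v) := by
    refine monotoneOn_of_deriv_nonneg (convex_Icc u v) (HasDerivAt.continuousOn hderiv) ?_ ?_
    · rw [interior_Icc]
      exact fun x hx ↦
        (hderiv x (Set.Ioo_subset_Icc_self hx)).differentiableAt.differentiableWithinAt
    · intro x hx
      rw [interior_Icc] at hx
      rw [(hderiv x (Set.Ioo_subset_Icc_self hx)).deriv]
      exact mul_nonneg (sub_nonneg.mpr hx.2.le) (sub_nonneg.mpr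
        (four_le_inv_mul_one_sub (hu.trans hx.1) (hx.2.trans hv)))
  have hfle : f u ≤ f v := hmono ⟨le_rfl, huv⟩ ⟨huv, le_rfl⟩ huv
  rw [log_div hu.ne' (hu.trans_le huv).ne', log_div (by linarith) (by linarith)]
  simp only [f] at hfle
  linear_combination hfle

lemma binary_pinsker {u v : ℝ} (hu0 : 0 < u) (hu1 : u < 1) (hv0 : 0 < v) (hv1 : v < 1) :
    v * log (u / v) + (1 - v) * log ((1 - u) / (1 - v)) ≤ -2 * (v - u) ^ 2 := by
  rcases le_total u v with huv | hvu
  · exact binary_pinsker_of_le hu0 huv hv1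
  -- both sides are invariant under `(u, v) ↦ (1 - u, 1 - v)`
  have h := binary_pinsker_of_le (u := 1 - u) (v := 1 - v) (by linarith) (by linarith)
    (by linarith)
  simp only [sub_sub_cancel] at h
  linear_combination h

lemma multinomial_pinsker_of_le {ι : Type*} (s : Finset ι) (hs : s.Nonempty) {μ p : ι → ℝ}
    (hμ : ∀ i ∈ s, 0 < μ i) (hp : ∀ i ∈ s, 0 < p i) (hμp : ∀ i ∈ s, μ i ≤ p i)
    (hP : ∑ i ∈ s, p i < 1) :
    ∑ i ∈ s, p i * log (μ i / p i)
        + (1 - ∑ i ∈ s, p i) * log ((1 - ∑ i ∈ s, μ i) / (1 - ∑ i ∈ s, p i))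
      ≤ -2 * ∑ i ∈ s, (p i - μ i) ^ 2 := by
  have hU0 : 0 < ∑ i ∈ s, μ i := sum_pos hμ hs
  have hUP : ∑ i ∈ s, μ i ≤ ∑ i ∈ s, p i := sum_le_sum hμp
  have hsq : ∑ i ∈ s, (p i - μ i) ^ 2 ≤ (∑ i ∈ s, p i - ∑ i ∈ s, μ i) ^ 2 := by
    rw [← sum_sub_distrib]
    exact sum_sq_le_sq_sum_of_nonneg fun i hi ↦ sub_nonneg.mpr (hμp i hi)
  linarith [sum_mul_log_div_le_mul_log_div_sum s hμ hp,
    binary_pinsker hU0 (by linarith) (hU0.trans_le hUP) hP]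

lemma prod_rpow_eq_exp_sum {ι : Type*} (s : Finset ι) {x : ι → ℝ} (hx : ∀ i ∈ s, 0 < x i)
    (a : ι → ℝ) : ∏ i ∈ s, x i ^ a i = exp (∑ i ∈ s, a i * log (x i)) := by
  rw [exp_sum]
  exact prod_congr rfl fun i hi ↦ by rw [rpow_def_of_pos (hx i hi), mul_comm]

theorem multinomial_prod_bound_general (M N : ℕ) (hM : 1 ≤ M)
    (μ p : ℕ → ℝ)
    (hμpos : ∀ m ≤ M, 0 < μ m)
    (hppos : ∀ m ≤ M, 0 < p m)
    (hμ0 : μ 0 = 1 - ∑ m ∈ Icc 1 M, μ m)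
    (hp0 : p 0 = 1 - ∑ m ∈ Icc 1 M, p m)
    (hμp : ∀ m, 1 ≤ m → m ≤ M → μ m < p m) :
    ∏ m ∈ range (M + 1), (μ m / p m) ^ (p m * N)
      ≤ Real.exp (-2 * N * ∑ m ∈ Icc 1 M, (p m - μ m) ^ 2) := by
  have hIcc : ∀ m ∈ Icc 1 M, 1 ≤ m ∧ m ≤ M := fun m ↦ mem_Icc.mp
  have hkl := multinomial_pinsker_of_le (Icc 1 M) (nonempty_Icc.mpr hM)
    (fun m hm ↦ hμpos m (hIcc m hm).2) (fun m hm ↦ hppos m (hIcc m hm).2)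
    (fun m hm ↦ (hμp m (hIcc m hm).1 (hIcc m hm).2).le)
    (by linarith [hp0 ▸ hppos 0 M.zero_le])
  rw [← hμ0, ← hp0] at hkl
  rw [prod_rpow_eq_exp_sum _ fun m hm ↦ div_pos (hμpos m (mem_range_succ_iff.mp hm))
    (hppos m (mem_range_succ_iff.mp hm)), exp_le_exp,
    sum_range_eq_add_Ico _ M.add_one_pos, Ico_add_one_right_eq_Icc]
  simp_rw [mul_right_comm _ (N : ℝ), ← sum_mul]
  linear_combination (N : ℝ) * hkl

theorem multinomial_prod_bound (M N : ℕ) (hM : 1 ≤ M) (hN : 1 ≤ N)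
    (μ p : ℕ → ℝ)
    (hμpos : ∀ m ≤ M, 0 < μ m) (hμlt : ∀ m ≤ M, μ m < 1)
    (hppos : ∀ m ≤ M, 0 < p m) (hplt : ∀ m ≤ M, p m < 1)
    (hμ0 : μ 0 = 1 - ∑ m ∈ Icc 1 M, μ m)
    (hp0 : p 0 = 1 - ∑ m ∈ Icc 1 M, p m)
    (hμp : ∀ m, 1 ≤ m → m ≤ M → μ m < p m) :
    ∏ m ∈ range (M + 1), (μ m / p m) ^ (p m * N)
      ≤ Real.exp (-2 * N * ∑ m ∈ Icc 1 M, (p m - μ m) ^ 2) :=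
  multinomial_prod_bound_general M N hM μ p hμpos hppos hμ0 hp0 hμp
end

section
/- Let s¹, …, s^M be nonnegative real-valued random variables on a probability space, and let ξ¹, …, ξ^M > 0. Then Pr{∃ m, s^m > ξ^m} ≤ Σ_{m=1}^{M} Σ_{Λ ⊆ {1,…,M}, |Λ| = m} ( ψ(Λ) + (Σ_{i∈Λ} E[(s^i)²]) / (Σ_{i∈Λ} (ξ^i)²) ), where ψ(Λ) := Pr{ {s^i > ξ^i for all i∈Λ} | {s^i ≤ ξ^i for all i∈Λᶜ} } − Pr{ s^i > ξ^i for all i∈Λ }, with the convention that the conditional probability term is interpreted as Pr of the intersection divided by Pr of the conditioning event (and as 0 if the conditioning event is null), and Λᶜ denotes the complement of Λ in {1,…,M}. -/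
open Finset MeasureTheory ProbabilityTheory

/-! Split the event according to the exact set `Λ` of coordinates exceeding their thresholds.
With `B Λ = {∀ i ∈ Λ, s i > ξ i}` and `C Λ = {∀ i ∉ Λ, s i ≤ ξ i}` the pieces `B Λ ∩ C Λ` cover
the event, and `Pr (B Λ ∩ C Λ) ≤ Pr (B Λ | C Λ) = ψ Λ + Pr (B Λ)`. On `B Λ` one has
`∑ i ∈ Λ, (s i)² ≥ ∑ i ∈ Λ, (ξ i)²`, so Markov's inequality bounds `Pr (B Λ)`. -/

section

variable {Ω : Type*}

theorem setOf_exists_subset_biUnion_powersetCard {ι : Type*} [Fintype ι] [DecidableEq ι]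
    (p q : ι → Ω → Prop) (hq : ∀ i ω, ¬ p i ω → q i ω) :
    {ω | ∃ i, p i ω} ⊆ ⋃ m ∈ Icc 1 (Fintype.card ι), ⋃ Λ ∈ powersetCard m (univ : Finset ι),
      {ω | ∀ i ∈ Λ, p i ω} ∩ {ω | ∀ i ∈ Λᶜ, q i ω} := by
  classical
  rintro ω ⟨i₀, hi₀⟩
  set Λ := univ.filter (p · ω)
  have hcard : #Λ ∈ Icc 1 (Fintype.card ι) :=
    mem_Icc.mpr ⟨card_pos.mpr ⟨i₀, by simpa [Λ] using hi₀⟩, card_le_univ Λ⟩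
  refine Set.mem_biUnion hcard (Set.mem_biUnion (mem_powersetCard.mpr ⟨subset_univ Λ, rfl⟩) ?_)
  refine ⟨fun i hi => (mem_filter.mp hi).2, fun i hi => hq i ω ?_⟩
  simpa [Λ] using hi

variable [MeasurableSpace Ω] (μ : Measure Ω)

theorem measureReal_setOf_exists_le_sum_powersetCard [IsFiniteMeasure μ] {ι : Type*}
    [Fintype ι] [DecidableEq ι] (p q : ι → Ω → Prop) (hq : ∀ i ω, ¬ p i ω → q i ω) :
    μ.real {ω | ∃ i, p i ω} ≤ ∑ m ∈ Icc 1 (Fintype.card ι), ∑ Λ ∈ powersetCard m univ,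
      μ.real ({ω | ∀ i ∈ Λ, p i ω} ∩ {ω | ∀ i ∈ Λᶜ, q i ω}) :=
  (measureReal_mono (setOf_exists_subset_biUnion_powersetCard p q hq) (measure_ne_top _ _)).trans <|
    (measureReal_biUnion_finset_le _ _).trans <|
      sum_le_sum fun _ _ => measureReal_biUnion_finset_le _ _

theorem measure_inter_le_cond_apply [IsZeroOrProbabilityMeasure μ] (s t : Set Ω) :
    μ (t ∩ s) ≤ μ[t | s] :=
  calc μ (t ∩ s) ≤ μ.restrict s t := Measure.le_restrict_apply s t
    _ = 1 * μ.restrict s t := (one_mul _).symm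
    _ ≤ (μ s)⁻¹ * μ.restrict s t := by gcongr; exact ENNReal.one_le_inv.mpr prob_le_one

theorem measureReal_inter_le_measureReal_cond [IsZeroOrProbabilityMeasure μ] (s t : Set Ω) :
    μ.real (t ∩ s) ≤ (μ[|s]).real t :=
  ENNReal.toReal_mono (measure_ne_top _ _) (measure_inter_le_cond_apply μ s t)

theorem measureReal_forall_gt_le_sum_integral_sq_div [IsFiniteMeasure μ] {ι : Type*}
    {Λ : Finset ι} (hΛ : Λ.Nonempty) (s : ι → Ω → ℝ) (ξ : ι → ℝ) (hξ : ∀ i ∈ Λ, 0 < ξ i)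
    (hs : ∀ i ∈ Λ, Integrable (fun ω => s i ω ^ 2) μ) :
    μ.real {ω | ∀ i ∈ Λ, s i ω > ξ i} ≤ (∑ i ∈ Λ, ∫ ω, s i ω ^ 2 ∂μ) / ∑ i ∈ Λ, ξ i ^ 2 := by
  set ε := ∑ i ∈ Λ, ξ i ^ 2
  have hε : 0 < ε := sum_pos (fun i hi => pow_pos (hξ i hi) 2) hΛ
  have hsub : {ω | ∀ i ∈ Λ, s i ω > ξ i} ⊆ {ω | ε ≤ ∑ i ∈ Λ, s i ω ^ 2} := fun ω hω =>
    sum_le_sum fun i hi => pow_le_pow_left₀ (hξ i hi).le (hω i hi).le 2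
  have markov := mul_meas_ge_le_integral_of_nonneg
    (ae_of_all μ fun ω => sum_nonneg fun i _ => sq_nonneg (s i ω))
    (integrable_finsetSum Λ hs) ε
  rw [integral_finsetSum Λ hs] at markov
  rw [le_div_iff₀ hε, mul_comm]
  exact (mul_le_mul_of_nonneg_left (measureReal_mono hsub) hε.le).trans markov

end

theorem chebyshev_union_bound_groups_general
    {Ω : Type*} [MeasurableSpace Ω] (μ : Measure Ω) [IsProbabilityMeasure μ]
    (M : ℕ) (s : Fin M → Ω → ℝ) (ξ : Fin M → ℝ)
    (hξ : ∀ i, 0 < ξ i)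
    (hL2 : ∀ i, Integrable (fun ω => (s i ω) ^ 2) μ) :
    (μ {ω | ∃ m, s m ω > ξ m}).toReal
      ≤ ∑ m ∈ Icc 1 M, ∑ Λ ∈ powersetCard m (univ : Finset (Fin M)),
          ((((μ[|{ω | ∀ i ∈ Λᶜ, s i ω ≤ ξ i}]) {ω | ∀ i ∈ Λ, s i ω > ξ i}).toReal
              - (μ {ω | ∀ i ∈ Λ, s i ω > ξ i}).toReal)
            + (∑ i ∈ Λ, ∫ ω, (s i ω) ^ 2 ∂μ) / (∑ i ∈ Λ, (ξ i) ^ 2)) := by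
  have cover := measureReal_setOf_exists_le_sum_powersetCard μ
    (fun i ω => s i ω > ξ i) (fun i ω => s i ω ≤ ξ i) fun _ _ => le_of_not_gt
  rw [Fintype.card_fin] at cover
  refine cover.trans (sum_le_sum fun m hm => sum_le_sum fun Λ hΛ => ?_)
  have hΛne : Λ.Nonempty :=
    card_pos.mp ((mem_powersetCard.mp hΛ).2 ▸ (mem_Icc.mp hm).1)
  have hcond := measureReal_inter_le_measureReal_cond μ {ω | ∀ i ∈ Λᶜ, s i ω ≤ ξ i}
    {ω | ∀ i ∈ Λ, s i ω > ξ i}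
  have hmarkov := measureReal_forall_gt_le_sum_integral_sq_div μ hΛne s ξ (fun i _ => hξ i)
    fun i _ => hL2 i
  simp only [measureReal_def] at hcond hmarkov ⊢
  linarith

theorem chebyshev_union_bound_groups
    {Ω : Type*} [MeasurableSpace Ω] (μ : Measure Ω) [IsProbabilityMeasure μ]
    (M : ℕ) (s : Fin M → Ω → ℝ) (ξ : Fin M → ℝ)
    (hmeas : ∀ i, Measurable (s i)) (hnonneg : ∀ i ω, 0 ≤ s i ω)
    (hξ : ∀ i, 0 < ξ i)
    (hL2 : ∀ i, Integrable (fun ω => (s i ω) ^ 2) μ) :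
    (μ {ω | ∃ m, s m ω > ξ m}).toReal
      ≤ ∑ m ∈ Icc 1 M, ∑ Λ ∈ powersetCard m (univ : Finset (Fin M)),
          ((((μ[|{ω | ∀ i ∈ Λᶜ, s i ω ≤ ξ i}]) {ω | ∀ i ∈ Λ, s i ω > ξ i}).toReal
              - (μ {ω | ∀ i ∈ Λ, s i ω > ξ i}).toReal)
            + (∑ i ∈ Λ, ∫ ω, (s i ω) ^ 2 ∂μ) / (∑ i ∈ Λ, (ξ i) ^ 2)) :=
  chebyshev_union_bound_groups_general μ M s ξ hξ hL2
end

section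
/- Let s¹, …, s^M be nonnegative real-valued random variables with finite second moments, and ξ¹, …, ξ^M > 0. Then Pr{∃ m, s^m > ξ^m} ≤ Σ_{m=1}^{M} Σ_{Λ ⊆ {1,…,M}, |Λ| = m} ( ψ(Λ) + (Σ_{i∈Λ} E[(s^i)²] + 2 Σ_{i<j, i,j∈Λ} E[s^i s^j]) / (Σ_{i∈Λ} ξ^i)² ), where ψ(Λ) := Pr{ {s^i > ξ^i}_{i∈Λ} | {s^i ≤ ξ^i}_{i∈Λᶜ} } − Pr{ {s^i > ξ^i}_{i∈Λ} }. -/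
open Finset MeasureTheory ProbabilityTheory

lemma aux_sq_sum_expand {ι : Type*} [LinearOrder ι] (Λ : Finset ι) (a : ι → ℝ) :
    (∑ i ∈ Λ, a i) ^ 2
      = ∑ i ∈ Λ, (a i) ^ 2 + 2 * ∑ i ∈ Λ, ∑ j ∈ Λ.filter (fun j => i < j), a i * a j := by
  have h1 : (∑ i ∈ Λ, a i) ^ 2 = ∑ i ∈ Λ, ∑ j ∈ Λ, a i * a j := by
    rw [sq, Finset.sum_mul_sum]
  rw [h1]
  have h2 : ∀ i ∈ Λ, ∑ j ∈ Λ, a i * a j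
      = (a i)^2 + (∑ j ∈ Λ.filter (fun j => j < i), a i * a j
        + ∑ j ∈ Λ.filter (fun j => i < j), a i * a j) := by
    intro i hi
    rw [← Finset.sum_filter_add_sum_filter_not Λ (fun j => j = i)]
    congr 1
    · rw [Finset.filter_eq', if_pos hi, Finset.sum_singleton, sq]
    · rw [← Finset.sum_filter_add_sum_filter_not (Λ.filter (fun j => ¬ j = i)) (fun j => j < i)]
      congr 1
      · congr 1; ext j; simp only [Finset.mem_filter]
        constructor
        · rintro ⟨⟨h1, _⟩, h2⟩; exact ⟨h1, h2⟩
        · rintro ⟨h1, h2⟩; exact ⟨⟨h1, ne_of_lt h2⟩, h2⟩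
      · congr 1; ext j; simp only [Finset.mem_filter]
        constructor
        · rintro ⟨⟨h1, h2⟩, h3⟩; exact ⟨h1, lt_of_le_of_ne (not_lt.mp h3) (Ne.symm h2)⟩
        · rintro ⟨h1, h2⟩; exact ⟨⟨h1, (ne_of_gt h2)⟩, not_lt.mpr h2.le⟩
  rw [Finset.sum_congr rfl h2, Finset.sum_add_distrib, Finset.sum_add_distrib]
  have h3 : ∑ i ∈ Λ, ∑ j ∈ Λ.filter (fun j => j < i), a i * a j
      = ∑ i ∈ Λ, ∑ j ∈ Λ.filter (fun j => i < j), a i * a j := by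
    rw [Finset.sum_comm' (t' := Λ) (s' := fun j => Λ.filter (fun i => j < i))
      (by intro x y; simp [Finset.mem_filter]; tauto)]
    exact Finset.sum_congr rfl fun i _ => Finset.sum_congr rfl fun j _ => mul_comm _ _
  rw [h3]; ring

theorem chebyshev_union_bound_groups_cov
    {Ω : Type*} [MeasurableSpace Ω] (μ : Measure Ω) [IsProbabilityMeasure μ]
    (M : ℕ) (s : Fin M → Ω → ℝ) (ξ : Fin M → ℝ)
    (hmeas : ∀ i, Measurable (s i)) (hnonneg : ∀ i ω, 0 ≤ s i ω)
    (hξ : ∀ i, 0 < ξ i)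
    (hL2 : ∀ i, Integrable (fun ω => (s i ω) ^ 2) μ)
    (hcross : ∀ i j, Integrable (fun ω => s i ω * s j ω) μ) :
    (μ {ω | ∃ m, s m ω > ξ m}).toReal
      ≤ ∑ m ∈ Icc 1 M, ∑ Λ ∈ powersetCard m (univ : Finset (Fin M)),
          ((((μ[|{ω | ∀ i ∈ Λᶜ, s i ω ≤ ξ i}]) {ω | ∀ i ∈ Λ, s i ω > ξ i}).toReal
              - (μ {ω | ∀ i ∈ Λ, s i ω > ξ i}).toReal)
            + ((∑ i ∈ Λ, ∫ ω, (s i ω) ^ 2 ∂μ)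
                + 2 * ∑ i ∈ Λ, ∑ j ∈ Λ.filter (fun j => i < j), ∫ ω, s i ω * s j ω ∂μ)
              / (∑ i ∈ Λ, ξ i) ^ 2) := by
  classical
  set C : Finset (Fin M) → Set Ω := fun Λ => {ω | ∀ i ∈ Λ, s i ω > ξ i} with hCdef
  set B : Finset (Fin M) → Set Ω := fun Λ => {ω | ∀ i ∈ Λᶜ, s i ω ≤ ξ i} with hBdef
  have hmC : ∀ Λ, MeasurableSet (C Λ) := by
    intro Λ
    have h : C Λ = ⋂ i ∈ Λ, {ω | ξ i < s i ω} := by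
      ext ω; simp [hCdef, Set.mem_iInter]
    rw [h]
    exact MeasurableSet.biInter Λ.countable_toSet
      (fun i _ => measurableSet_lt measurable_const (hmeas i))
  have hmB : ∀ Λ, MeasurableSet (B Λ) := by
    intro Λ
    have h : B Λ = ⋂ i ∈ Λᶜ, {ω | s i ω ≤ ξ i} := by
      ext ω; simp [hBdef, Set.mem_iInter]
    rw [h]
    exact MeasurableSet.biInter (Λᶜ).countable_toSet
      (fun i _ => measurableSet_le (hmeas i) measurable_const)
  -- key per-Λ bound
  have key : ∀ Λ : Finset (Fin M), Λ.Nonempty →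
      (μ (C Λ ∩ B Λ)).toReal
        ≤ (((μ[|B Λ]) (C Λ)).toReal - (μ (C Λ)).toReal)
          + ((∑ i ∈ Λ, ∫ ω, (s i ω) ^ 2 ∂μ)
              + 2 * ∑ i ∈ Λ, ∑ j ∈ Λ.filter (fun j => i < j), ∫ ω, s i ω * s j ω ∂μ)
            / (∑ i ∈ Λ, ξ i) ^ 2 := by
    intro Λ hΛ
    have hc : 0 < ∑ i ∈ Λ, ξ i := Finset.sum_pos (fun i _ => hξ i) hΛ
    -- conditional bound
    have hcond : (μ (C Λ ∩ B Λ)).toReal ≤ ((μ[|B Λ]) (C Λ)).toReal := by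
      rcases eq_or_ne (μ (B Λ)) 0 with h0 | h0
      · have hz : μ (C Λ ∩ B Λ) = 0 :=
          measure_mono_null Set.inter_subset_right h0
        rw [hz]; simp [ENNReal.toReal_nonneg]
      · have h1 : μ (C Λ ∩ B Λ) ≤ (μ[|B Λ]) (C Λ) := by
          rw [cond_apply (hmB Λ), Set.inter_comm (C Λ)]
          calc μ (B Λ ∩ C Λ) = 1 * μ (B Λ ∩ C Λ) := (one_mul _).symm
            _ ≤ (μ (B Λ))⁻¹ * μ (B Λ ∩ C Λ) :=
                mul_le_mul_left (ENNReal.one_le_inv.mpr prob_le_one) _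
        have h2 : (μ[|B Λ]) (C Λ) ≤ 1 := by
          rw [cond_apply (hmB Λ)]
          calc (μ (B Λ))⁻¹ * μ (B Λ ∩ C Λ)
              ≤ (μ (B Λ))⁻¹ * μ (B Λ) :=
                mul_le_mul_right (measure_mono Set.inter_subset_left) _
            _ = 1 := ENNReal.inv_mul_cancel h0 (measure_ne_top μ _)
        exact ENNReal.toReal_mono (ne_top_of_le_ne_top ENNReal.one_ne_top h2) h1
    -- Chebyshev bound
    set c := ∑ i ∈ Λ, ξ i with hcdef
    have hfint : Integrable (fun ω => (∑ i ∈ Λ, s i ω) ^ 2) μ := by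
      have h : (fun ω => (∑ i ∈ Λ, s i ω) ^ 2)
          = fun ω => ∑ i ∈ Λ, ∑ j ∈ Λ, s i ω * s j ω := by
        funext ω; rw [sq, Finset.sum_mul_sum]
      rw [h]
      exact integrable_finset_sum _
        (fun i _ => integrable_finset_sum _ (fun j _ => hcross i j))
    have hsub : C Λ ⊆ {ω | c ^ 2 ≤ (∑ i ∈ Λ, s i ω) ^ 2} := by
      intro ω hω
      have h1 : c ≤ ∑ i ∈ Λ, s i ω := Finset.sum_le_sum (fun i hi => (hω i hi).le)
      exact pow_le_pow_left₀ hc.le h1 2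
    have hcheb : (μ (C Λ)).toReal ≤ (∫ ω, (∑ i ∈ Λ, s i ω) ^ 2 ∂μ) / c ^ 2 := by
      have hm := mul_meas_ge_le_integral_of_nonneg (μ := μ)
        (f := fun ω => (∑ i ∈ Λ, s i ω) ^ 2)
        (Filter.Eventually.of_forall fun ω => sq_nonneg _) hfint (c ^ 2)
      have hmono : (μ (C Λ)).toReal
          ≤ (μ {ω | c ^ 2 ≤ (∑ i ∈ Λ, s i ω) ^ 2}).toReal :=
        ENNReal.toReal_mono (measure_ne_top μ _) (measure_mono hsub)
      have hc2 : (0:ℝ) < c ^ 2 := pow_pos hc 2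
      rw [le_div_iff₀ hc2]
      calc (μ (C Λ)).toReal * c ^ 2
          ≤ (μ {ω | c ^ 2 ≤ (∑ i ∈ Λ, s i ω) ^ 2}).toReal * c ^ 2 :=
            mul_le_mul_of_nonneg_right hmono hc2.le
        _ = c ^ 2 * (μ {ω | c ^ 2 ≤ (∑ i ∈ Λ, s i ω) ^ 2}).toReal := mul_comm _ _
        _ ≤ ∫ ω, (∑ i ∈ Λ, s i ω) ^ 2 ∂μ := hm
    have hexp : ∫ ω, (∑ i ∈ Λ, s i ω) ^ 2 ∂μ
        = (∑ i ∈ Λ, ∫ ω, (s i ω) ^ 2 ∂μ)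
          + 2 * ∑ i ∈ Λ, ∑ j ∈ Λ.filter (fun j => i < j), ∫ ω, s i ω * s j ω ∂μ := by
      have hpt : ∀ ω, (∑ i ∈ Λ, s i ω) ^ 2
          = (∑ i ∈ Λ, (s i ω) ^ 2)
            + 2 * ∑ i ∈ Λ, ∑ j ∈ Λ.filter (fun j => i < j), s i ω * s j ω :=
        fun ω => aux_sq_sum_expand Λ (fun i => s i ω)
      have hI1 : Integrable (fun ω => ∑ i ∈ Λ, (s i ω) ^ 2) μ :=
        integrable_finset_sum _ (fun i _ => hL2 i)
      have hI2 : Integrable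
          (fun ω => ∑ i ∈ Λ, ∑ j ∈ Λ.filter (fun j => i < j), s i ω * s j ω) μ :=
        integrable_finset_sum _
          (fun i _ => integrable_finset_sum _ (fun j _ => hcross i j))
      calc ∫ ω, (∑ i ∈ Λ, s i ω) ^ 2 ∂μ
          = ∫ ω, ((∑ i ∈ Λ, (s i ω) ^ 2)
              + 2 * ∑ i ∈ Λ, ∑ j ∈ Λ.filter (fun j => i < j), s i ω * s j ω) ∂μ := by
            exact integral_congr_ae (Filter.Eventually.of_forall hpt)
        _ = (∫ ω, ∑ i ∈ Λ, (s i ω) ^ 2 ∂μ)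
              + ∫ ω, 2 * ∑ i ∈ Λ, ∑ j ∈ Λ.filter (fun j => i < j), s i ω * s j ω ∂μ :=
            integral_add hI1 (hI2.const_mul 2)
        _ = (∑ i ∈ Λ, ∫ ω, (s i ω) ^ 2 ∂μ)
              + 2 * ∑ i ∈ Λ, ∑ j ∈ Λ.filter (fun j => i < j), ∫ ω, s i ω * s j ω ∂μ := by
            rw [integral_finset_sum _ (fun i _ => hL2 i), integral_const_mul]
            congr 1
            rw [integral_finset_sum _
              (fun i _ => integrable_finset_sum _ (fun j _ => hcross i j))]
            congr 1
            exact Finset.sum_congr rfl fun i _ =>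
              integral_finset_sum _ (fun j _ => hcross i j)
    rw [← hexp]
    linarith [hcond, hcheb]
  -- partition of the event
  set S : Finset (Finset (Fin M)) := univ.filter (fun Λ => Λ ≠ ∅) with hSdef
  have hev : {ω | ∃ m, s m ω > ξ m} = ⋃ Λ ∈ S, (C Λ ∩ B Λ) := by
    ext ω
    simp only [Set.mem_setOf_eq, Set.mem_iUnion, hSdef, Finset.mem_filter,
      Finset.mem_univ, true_and]
    constructor
    · rintro ⟨m, hm⟩
      refine ⟨univ.filter (fun i => ξ i < s i ω), ?_, ?_, ?_⟩
      · intro h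
        have : m ∈ univ.filter (fun i => ξ i < s i ω) := by
          simp [hm]
        rw [h] at this; exact absurd this (Finset.notMem_empty m)
      · intro i hi
        simpa using (Finset.mem_filter.mp hi).2
      · intro i hi
        have := Finset.mem_compl.mp hi
        simp only [Finset.mem_filter, Finset.mem_univ, true_and] at this
        exact not_lt.mp this
    · rintro ⟨Λ, hne, hC, _⟩
      obtain ⟨i, hi⟩ := Finset.nonempty_iff_ne_empty.mpr hne
      exact ⟨i, hC i hi⟩
  have hdisj : (S : Set (Finset (Fin M))).PairwiseDisjoint (fun Λ => C Λ ∩ B Λ) := by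
    intro Λ₁ h₁ Λ₂ h₂ hne
    refine Set.disjoint_left.mpr ?_
    rintro ω ⟨hC1, hB1⟩ ⟨hC2, hB2⟩
    apply hne
    ext i
    constructor
    · intro hi
      by_contra hi2
      exact absurd (hC1 i hi) (not_lt.mpr (hB2 i (Finset.mem_compl.mpr hi2)))
    · intro hi
      by_contra hi2
      exact absurd (hC2 i hi) (not_lt.mpr (hB1 i (Finset.mem_compl.mpr hi2)))
  have hmeqn : μ {ω | ∃ m, s m ω > ξ m} = ∑ Λ ∈ S, μ (C Λ ∩ B Λ) := by
    rw [hev]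
    exact measure_biUnion_finset hdisj (fun Λ _ => (hmC Λ).inter (hmB Λ))
  have htoReal : (μ {ω | ∃ m, s m ω > ξ m}).toReal
      = ∑ Λ ∈ S, (μ (C Λ ∩ B Λ)).toReal := by
    rw [hmeqn, ENNReal.toReal_sum (fun Λ _ => measure_ne_top μ _)]
  -- reindex the RHS as a sum over S
  have hreindex : S = (Icc 1 M).biUnion (fun m => powersetCard m (univ : Finset (Fin M))) := by
    ext Λ
    simp only [hSdef, Finset.mem_filter, Finset.mem_univ, true_and, Finset.mem_biUnion,
      Finset.mem_Icc, Finset.mem_powersetCard_univ]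
    constructor
    · intro h
      refine ⟨Λ.card, ⟨?_, ?_⟩, rfl⟩
      · exact Finset.card_pos.mpr (Finset.nonempty_iff_ne_empty.mpr h)
      · simpa using Finset.card_le_univ Λ
    · rintro ⟨m, ⟨h1, _⟩, rfl⟩
      exact Finset.nonempty_iff_ne_empty.mp (Finset.card_pos.mp h1)
  have hpd : Set.PairwiseDisjoint ↑(Icc 1 M)
      (fun m => powersetCard m (univ : Finset (Fin M))) := by
    intro m₁ _ m₂ _ hne
    refine Finset.disjoint_left.mpr ?_
    intro Λ h1 h2
    rw [Finset.mem_powersetCard_univ] at h1 h2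
    exact hne (h1 ▸ h2 ▸ rfl)
  rw [htoReal]
  calc ∑ Λ ∈ S, (μ (C Λ ∩ B Λ)).toReal
      ≤ ∑ Λ ∈ S, ((((μ[|B Λ]) (C Λ)).toReal - (μ (C Λ)).toReal)
          + ((∑ i ∈ Λ, ∫ ω, (s i ω) ^ 2 ∂μ)
              + 2 * ∑ i ∈ Λ, ∑ j ∈ Λ.filter (fun j => i < j), ∫ ω, s i ω * s j ω ∂μ)
            / (∑ i ∈ Λ, ξ i) ^ 2) := by
        refine Finset.sum_le_sum (fun Λ hΛ => key Λ ?_)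
        rw [hSdef, Finset.mem_filter] at hΛ
        exact Finset.nonempty_iff_ne_empty.mpr hΛ.2
    _ = _ := by
        rw [hreindex, Finset.sum_biUnion hpd]
end

section
/- Let s₁, …, s_N be i.i.d. nonnegative real-valued random variables and ξ > 0. Then Pr{ Σ_{n=1}^N s_n ≤ N·ξ } ≤ 2 · Pr{ s₁ ≤ 2ξ }. -/
/-!
On the event `∑ sₙ ≤ N ξ`, at most `N / 2` of the `sₙ` can exceed `2 ξ` (otherwise their sum
alone would exceed `N ξ`), so at least `N / 2` coordinates lie in `{s ≤ 2 ξ}`. The number of such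
coordinates has mean `N · P{s ≤ 2 ξ}`, and Markov's inequality at level `N / 2` gives the bound.
-/

open Finset MeasureTheory
open scoped ENNReal

theorem card_le_two_mul_card_filter_le_two_mul {ι : Type*} [Fintype ι] {f : ι → ℝ}
    (hf : ∀ i, 0 ≤ f i) {ξ : ℝ} (hξ : 0 < ξ) (hsum : ∑ i, f i ≤ Fintype.card ι * ξ) :
    Fintype.card ι ≤ 2 * #{i | f i ≤ 2 * ξ} := by
  set large : Finset ι := {i | ¬f i ≤ 2 * ξ}
  have hsplit : #{i | f i ≤ 2 * ξ} + #large = Fintype.card ι :=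
    card_filter_add_card_filter_not _
  have hlarge : 2 * ξ * #large ≤ Fintype.card ι * ξ :=
    calc 2 * ξ * #large ≤ ∑ i ∈ large, f i := by
          rw [mul_comm, ← nsmul_eq_mul]
          exact card_nsmul_le_sum _ _ _ fun i hi => (not_le.1 (mem_filter.1 hi).2).le
      _ ≤ ∑ i, f i := sum_le_sum_of_subset_of_nonneg (subset_univ _) fun i _ _ => hf i
      _ ≤ Fintype.card ι * ξ := hsum
  have : ((2 * #large : ℕ) : ℝ) ≤ Fintype.card ι :=
    le_of_mul_le_mul_right (by push_cast; linarith) hξ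
  have : 2 * #large ≤ Fintype.card ι := by exact_mod_cast this
  omega

theorem natCast_card_filter_mem_eq_sum_indicator {ι Ω : Type*} [Fintype ι] {A : Set Ω}
    [DecidablePred (· ∈ A)] (ω : ι → Ω) :
    (#{i | ω i ∈ A} : ℝ≥0∞) = ∑ i, A.indicator 1 (ω i) := by
  simp only [card_filter, Nat.cast_sum, Set.indicator_apply, Pi.one_apply, Nat.cast_ite,
    Nat.cast_one, Nat.cast_zero]

section IIDCount

variable {ι Ω : Type*} [Fintype ι] [MeasurableSpace Ω] {P : Measure Ω} [IsProbabilityMeasure P]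
  {A : Set Ω} [DecidablePred (· ∈ A)]

theorem lintegral_card_filter_mem_pi (hA : MeasurableSet A) :
    ∫⁻ ω, (#{i | ω i ∈ A} : ℝ≥0∞) ∂(Measure.pi fun _ : ι => P) = Fintype.card ι * P A := by
  simp_rw [natCast_card_filter_mem_eq_sum_indicator]
  rw [lintegral_finsetSum' (f := fun i (ω : ι → Ω) => A.indicator (1 : Ω → ℝ≥0∞) (ω i)) _
    fun i _ => ((measurable_one.indicator hA).comp (measurable_pi_apply i)).aemeasurable]
  have hcoord (i : ι) : ∫⁻ ω, A.indicator 1 (ω i) ∂(Measure.pi fun _ : ι => P) = P A := by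
    rw [(measurePreserving_eval (fun _ => P) i).lintegral_comp (measurable_one.indicator hA)]
    exact lintegral_indicator_one hA
  simp [hcoord]

theorem mul_pi_le_card_filter_mem_le (hA : MeasurableSet A) (ε : ℝ≥0∞) :
    ε * (Measure.pi fun _ : ι => P) {ω | ε ≤ #{i | ω i ∈ A}} ≤ Fintype.card ι * P A := by
  rw [← lintegral_card_filter_mem_pi hA]
  refine mul_meas_ge_le_lintegral ?_ ε
  simp_rw [natCast_card_filter_mem_eq_sum_indicator]
  exact measurable_sum _ fun i _ => (measurable_one.indicator hA).comp (measurable_pi_apply i)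

end IIDCount

/-- Small-deviation lemma for i.i.d. nonnegative random variables (M = 1 case),
with i.i.d. copies encoded via the product measure. -/
theorem small_deviation_scalar
    {Ω : Type*} [MeasurableSpace Ω] (P : Measure Ω) [IsProbabilityMeasure P]
    (N : ℕ) (hN : 1 ≤ N) (s : Ω → ℝ)
    (hmeas : Measurable s) (hnonneg : ∀ᵐ x ∂P, 0 ≤ s x)
    (ξ : ℝ) (hξ : 0 < ξ) :
    (Measure.pi fun _ : Fin N => P) {ω | ∑ n : Fin N, s (ω n) ≤ N * ξ}
      ≤ 2 * P {x | s x ≤ 2 * ξ} := by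
  set μ := Measure.pi fun _ : Fin N => P
  set A := {x | s x ≤ 2 * ξ}
  have hA : MeasurableSet A := hmeas measurableSet_Iic
  have hcoords : ∀ᵐ ω ∂μ, ∀ n, 0 ≤ s (ω n) := ae_all_iff.2 fun n =>
    (measurePreserving_eval (fun _ => P) n).quasiMeasurePreserving.ae hnonneg
  have hhalf : {ω | ∑ n : Fin N, s (ω n) ≤ N * ξ} ≤ᵐ[μ]
      {ω | (N : ℝ≥0∞) / 2 ≤ #{n | ω n ∈ A}} := by
    filter_upwards [hcoords] with ω hω hsum
    have hcount := card_le_two_mul_card_filter_le_two_mul hω hξ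
      (by rw [Fintype.card_fin]; exact hsum)
    rw [Fintype.card_fin] at hcount
    refine ENNReal.div_le_of_le_mul' ?_
    exact_mod_cast hcount
  have hN₀ : (N : ℝ≥0∞) / 2 ≠ 0 :=
    (ENNReal.div_pos_iff.2 ⟨by exact_mod_cast (by omega : N ≠ 0), ENNReal.ofNat_ne_top⟩).ne'
  have hN_top : (N : ℝ≥0∞) / 2 ≠ ∞ := ENNReal.div_ne_top (ENNReal.natCast_ne_top N) two_ne_zero
  refine (ENNReal.mul_le_mul_iff_right hN₀ hN_top).1 ?_
  calc (N : ℝ≥0∞) / 2 * μ {ω | ∑ n : Fin N, s (ω n) ≤ N * ξ}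
      ≤ (N : ℝ≥0∞) / 2 * μ {ω | (N : ℝ≥0∞) / 2 ≤ #{n | ω n ∈ A}} :=
        mul_le_mul_right (measure_mono_ae hhalf) _
    _ ≤ N * P A := by simpa using mul_pi_le_card_filter_mem_le (ι := Fin N) (P := P) hA _
    _ = (N : ℝ≥0∞) / 2 * (2 * P A) := by
        rw [← mul_assoc, ENNReal.div_mul_cancel two_ne_zero ENNReal.ofNat_ne_top]
end

section
/- Let F : Ω → ℝ^M be a random vector with bounded coordinates, each coordinate f^[m] taking values in [a, b], sampled i.i.d. N times as vectors F(ω_1), …, F(ω_N) with mean vector EF. Then for any ξ ∈ ℝ^M with all coordinates positive, Pr{ for every m, |(1/N) Σ_{n=1}^N f^[m](ω_n) − E f^[m]| > ξ^[m] } ≤ 2^M exp( −(2N / (M²(b−a)²)) Σ_{m=1}^M (ξ^[m])² ). -/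
/-!
Only one coordinate is needed: the event forces the deviation of the coordinate `m₀` with the
largest `ξ m₀` to exceed `ξ m₀`, and two-sided Hoeffding bounds that by
`2 exp (-2 N (ξ m₀)² / (b - a)²)`. Since `∑ m, (ξ m)² / M² ≤ (ξ m₀)²` and `2 ≤ 2 ^ M`, this is
below the stated bound.
-/

open MeasureTheory ProbabilityTheory Finset Real

section IIDSample

variable {Ω : Type*} [MeasurableSpace Ω] {P : Measure Ω} [IsProbabilityMeasure P]
  {g : Ω → ℝ} {a b : ℝ}

lemma hasSubgaussianMGF_eval_sub_integral {ι : Type*} [Fintype ι] (hg : AEMeasurable g P)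
    (hbd : ∀ᵐ x ∂P, g x ∈ Set.Icc a b) (i : ι) :
    HasSubgaussianMGF (fun ω : ι → Ω => g (ω i) - P[g]) ((‖b - a‖₊ / 2) ^ 2)
      (Measure.pi fun _ => P) := by
  have hmap : (Measure.pi fun _ : ι => P).map (fun ω => ω i) = P :=
    (measurePreserving_eval (fun _ => P) i).map_eq
  refine HasSubgaussianMGF.of_map (Y := fun ω : ι → Ω => ω i) (X := fun x => g x - P[g])
    (measurable_pi_apply i).aemeasurable ?_
  rw [hmap]
  exact hasSubgaussianMGF_of_mem_Icc hg hbd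

lemma measureReal_sum_sub_integral_ge_le {ι : Type*} [Fintype ι] (hg : AEMeasurable g P)
    (hbd : ∀ᵐ x ∂P, g x ∈ Set.Icc a b) {ε : ℝ} (hε : 0 ≤ ε) :
    (Measure.pi fun _ : ι => P).real {ω | ε ≤ ∑ i, (g (ω i) - P[g])}
      ≤ exp (-2 * ε ^ 2 / (Fintype.card ι * (b - a) ^ 2)) := by
  have hindep : iIndepFun (fun (i : ι) (ω : ι → Ω) => g (ω i) - P[g]) (Measure.pi fun _ => P) :=
    iIndepFun_pi (X := fun _ x => g x - P[g]) fun _ => hg.sub_const _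
  refine (HasSubgaussianMGF.measure_sum_ge_le_of_iIndepFun hindep
    (fun i _ => hasSubgaussianMGF_eval_sub_integral hg hbd i) hε).trans_eq ?_
  congr 1
  simp only [sum_const, card_univ, nsmul_eq_mul, NNReal.coe_mul, NNReal.coe_natCast,
    NNReal.coe_pow, NNReal.coe_div, coe_nnnorm, Real.norm_eq_abs, NNReal.coe_ofNat, div_pow, sq_abs]
  generalize (b - a) ^ 2 = s
  ring

lemma le_abs_sum_sub_of_lt_abs_mean_sub {N : ℕ} (x : Fin N → ℝ) {e ε : ℝ}
    (h : ε < |(1 / N : ℝ) * ∑ n, x n - e|) : N * ε ≤ |∑ n, (x n - e)| := by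
  have hmean : (N : ℝ) * ((1 / N : ℝ) * ∑ n, x n) = ∑ n, x n := by
    rcases N.eq_zero_or_pos with rfl | hN
    · simp
    · field_simp
  calc (N : ℝ) * ε ≤ N * |(1 / N : ℝ) * ∑ n, x n - e| := by gcongr
    _ = |N * ((1 / N : ℝ) * ∑ n, x n - e)| := by rw [abs_mul, Nat.abs_cast]
    _ = |∑ n, (x n - e)| := by
      rw [mul_sub, hmean, sum_sub_distrib, sum_const,
        card_univ, Fintype.card_fin, nsmul_eq_mul]

lemma measureReal_abs_mean_sub_integral_gt_le (N : ℕ) (hg : AEMeasurable g P)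
    (hbd : ∀ᵐ x ∂P, g x ∈ Set.Icc a b) {ε : ℝ} (hε : 0 ≤ ε) :
    (Measure.pi fun _ : Fin N => P).real
        {ω | ε < |(1 / N : ℝ) * ∑ n, g (ω n) - ∫ x, g x ∂P|}
      ≤ 2 * exp (-2 * N * ε ^ 2 / (b - a) ^ 2) := by
  have hNε : 0 ≤ (N : ℝ) * ε := by positivity
  have hbd_neg : ∀ᵐ x ∂P, (-g) x ∈ Set.Icc (-b) (-a) := by
    filter_upwards [hbd] with x ⟨hax, hxb⟩ using ⟨neg_le_neg hxb, neg_le_neg hax⟩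
  have hupper := measureReal_sum_sub_integral_ge_le hg hbd hNε (ι := Fin N)
  have hlower := measureReal_sum_sub_integral_ge_le hg.neg hbd_neg hNε (ι := Fin N)
  have hsub : {ω : Fin N → Ω | ε < |(1 / N : ℝ) * ∑ n, g (ω n) - ∫ x, g x ∂P|}
      ⊆ {ω | N * ε ≤ ∑ n, (g (ω n) - P[g])} ∪ {ω | N * ε ≤ ∑ n, ((-g) (ω n) - P[-g])} := by
    intro ω hω
    have hneg : ∑ n, ((-g) (ω n) - P[-g]) = -∑ n, (g (ω n) - P[g]) := by
      simp only [Pi.neg_apply, integral_neg, ← sum_neg_distrib, neg_sub_neg, neg_sub]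
    simpa only [Set.mem_union, Set.mem_ofPred_eq, hneg] using
      le_abs.mp (le_abs_sum_sub_of_lt_abs_mean_sub _ hω)
  have hba : (-a - -b) ^ 2 = (b - a) ^ 2 := by ring
  rw [Fintype.card_fin, hba] at hlower
  rw [Fintype.card_fin] at hupper
  calc _ ≤ _ := measureReal_mono hsub
    _ ≤ _ := measureReal_union_le _ _
    _ ≤ 2 * exp (-2 * (N * ε) ^ 2 / (N * (b - a) ^ 2)) := by linarith
    _ = 2 * exp (-2 * N * ε ^ 2 / (b - a) ^ 2) := by
      rcases N.eq_zero_or_pos with rfl | hN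
      · simp
      · field_simp

end IIDSample

lemma sum_div_sq_card_le {ι : Type*} [Fintype ι] {x : ι → ℝ} {c : ℝ} (hx : ∀ i, x i ≤ c)
    (hc : 0 ≤ c) : (∑ i, x i) / Fintype.card ι ^ 2 ≤ c := by
  rcases (Fintype.card ι).eq_zero_or_pos with h0 | hpos
  · simpa [h0] using hc
  have hpos' : (1 : ℝ) ≤ Fintype.card ι := by exact_mod_cast hpos
  calc (∑ i, x i) / Fintype.card ι ^ 2 ≤ Fintype.card ι * c / Fintype.card ι ^ 2 := by
        gcongr
        simpa using sum_le_card_nsmul univ x c fun i _ => hx i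
    _ = c / Fintype.card ι := by field_simp
    _ ≤ c := div_le_self hc hpos'

theorem hoeffding_vector_general
    {Ω : Type*} [MeasurableSpace Ω] (P : Measure Ω) [IsProbabilityMeasure P]
    (M N : ℕ) (hM : 1 ≤ M) (f : Fin M → Ω → ℝ)
    (hmeas : ∀ m, Measurable (f m))
    (a b : ℝ) (hbd : ∀ m ω, a ≤ f m ω ∧ f m ω ≤ b)
    (ξ : Fin M → ℝ) (hξ : ∀ m, 0 < ξ m) :
    (Measure.pi fun _ : Fin N => P)
        {ω | ∀ m, |(1 / N : ℝ) * ∑ n : Fin N, f m (ω n) - ∫ x, f m x ∂P| > ξ m}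
      ≤ ENNReal.ofReal
          (2 ^ M * Real.exp (-(2 * N / (M ^ 2 * (b - a) ^ 2)) * ∑ m : Fin M, (ξ m) ^ 2)) := by
  obtain ⟨m₀, -, hmax⟩ := exists_max_image univ ξ ⟨⟨0, hM⟩, mem_univ _⟩
  have hsq : (∑ m, ξ m ^ 2) / M ^ 2 ≤ ξ m₀ ^ 2 := by
    simpa using sum_div_sq_card_le
      (fun m => pow_le_pow_left₀ (hξ m).le (hmax m (mem_univ m)) 2) (sq_nonneg (ξ m₀))
  have hexp : -2 * N * ξ m₀ ^ 2 / (b - a) ^ 2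
      ≤ -(2 * N / (M ^ 2 * (b - a) ^ 2)) * ∑ m, ξ m ^ 2 :=
    calc _ = -(2 * N / (b - a) ^ 2 * ξ m₀ ^ 2) := by ring
      _ ≤ -(2 * N / (b - a) ^ 2 * ((∑ m, ξ m ^ 2) / M ^ 2)) := neg_le_neg (by gcongr)
      _ = _ := by generalize (b - a) ^ 2 = s; ring
  calc _ ≤ (Measure.pi fun _ : Fin N => P)
        {ω | ξ m₀ < |(1 / N : ℝ) * ∑ n, f m₀ (ω n) - ∫ x, f m₀ x ∂P|} :=
        measure_mono fun _ hω => by exact hω m₀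
    _ ≤ ENNReal.ofReal (2 * exp (-2 * N * ξ m₀ ^ 2 / (b - a) ^ 2)) := by
      rw [← ofReal_measureReal]
      exact ENNReal.ofReal_le_ofReal <| measureReal_abs_mean_sub_integral_gt_le N
        (hmeas m₀).aemeasurable (Filter.Eventually.of_forall fun ω => hbd m₀ ω) (hξ m₀).le
    _ ≤ _ := by
      gcongr
      exact le_self_pow₀ one_le_two (by omega)

/-- Hoeffding-type deviation inequality for random vectors with coordinates in
[a, b], with the i.i.d. sample encoded via the product measure. -/
theorem hoeffding_vector
    {Ω : Type*} [MeasurableSpace Ω] (P : Measure Ω) [IsProbabilityMeasure P]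
    (M N : ℕ) (hM : 1 ≤ M) (hN : 1 ≤ N) (f : Fin M → Ω → ℝ)
    (hmeas : ∀ m, Measurable (f m))
    (a b : ℝ) (hab : a < b) (hbd : ∀ m ω, a ≤ f m ω ∧ f m ω ≤ b)
    (ξ : Fin M → ℝ) (hξ : ∀ m, 0 < ξ m) :
    (Measure.pi fun _ : Fin N => P)
        {ω | ∀ m, |(1 / N : ℝ) * ∑ n : Fin N, f m (ω n) - ∫ x, f m x ∂P| > ξ m}
      ≤ ENNReal.ofReal
          (2 ^ M * Real.exp (-(2 * N / (M ^ 2 * (b - a) ^ 2)) * ∑ m : Fin M, (ξ m) ^ 2)) :=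
  hoeffding_vector_general P M N hM f hmeas a b hbd ξ hξ
end
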